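/- arXiv:2605.22184 — 7 statements merged into one kernel-verified Lean document; each statement's English description precedes it below -/
import Mathlib

section
/- Let Δ ⊂ N_ℝ be a terminal reflexive lattice polytope and v₁ ∈ N a primitive lattice vector. Then {v₁, −v₁} is a pair of vertices of Δ (a primitive pair of degree 2) if and only if the lattice width of the polar polytope Δ° along v₁ equals 2, i.e. the length of the interval ⟨·, v₁⟩(Δ°) is 2. -/
open Finset

/-- The canonical embedding of integral points into `ℝⁿ`. -/
def intVec {n : ℕ} (p : Fin n → ℤ) : Fin n → ℝ := fun i => (p i : ℝ)

lemma dot_comm' {n : ℕ} (x y : Fin n → ℝ) : ∑ i, x i * y i = ∑ i, y i * x i :=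
  Finset.sum_congr rfl fun i _ => mul_comm _ _

noncomputable def dotL {n : ℕ} (c : Fin n → ℝ) : (Fin n → ℝ) →ₗ[ℝ] ℝ where
  toFun x := ∑ i, x i * c i
  map_add' x y := by simp [add_mul, Finset.sum_add_distrib]
  map_smul' r x := by simp [Finset.mul_sum, mul_assoc]

@[simp] lemma dotL_apply {n : ℕ} (c x : Fin n → ℝ) : dotL c x = ∑ i, x i * c i := rfl

lemma sum_mul_smul' {n : ℕ} (x y : Fin n → ℝ) (c : ℝ) :
    ∑ i, x i * (c • y) i = c * ∑ i, x i * y i := by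
  rw [Finset.mul_sum]
  exact Finset.sum_congr rfl fun i _ => by simp [smul_eq_mul]; ring

lemma smul_mul_sum' {n : ℕ} (x y : Fin n → ℝ) (c : ℝ) :
    ∑ i, (c • x) i * y i = c * ∑ i, x i * y i := by
  rw [Finset.mul_sum]
  exact Finset.sum_congr rfl fun i _ => by simp [smul_eq_mul]; ring

lemma clm_apply_eq_sum {n : ℕ} (f : (Fin n → ℝ) →L[ℝ] ℝ) (x : Fin n → ℝ) :
    f x = ∑ i, x i * f (Pi.single i 1) := by
  conv_lhs => rw [pi_eq_sum_univ x]
  rw [map_sum]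
  refine Finset.sum_congr rfl fun i _ => ?_
  have h : (fun j => if i = j then (1:ℝ) else 0) = Pi.single i 1 := by
    funext j; simp [Pi.single_apply, eq_comm]
  rw [h, map_smul, smul_eq_mul]

lemma intVec_neg {n : ℕ} (w : Fin n → ℤ) : intVec (-w) = -(intVec w) := by
  funext i; simp [intVec]

lemma intVec_dot_cast {n : ℕ} (w p : Fin n → ℤ) :
    ∑ i, intVec w i * intVec p i = ((∑ i, w i * p i : ℤ) : ℝ) := by
  push_cast [intVec]; rfl


/-- Let `Δ ⊂ N_ℝ` be a terminal reflexive lattice polytope (the convex hull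
of its vertex set `V`, with `0` in its interior, the polar `Δ°` a lattice polytope, and
`Δ ∩ N = {0} ∪ V`), and let `v₁ ∈ N` be a primitive lattice vector.  Then `{v₁, -v₁}` is a
pair of vertices of `Δ` if and only if the lattice width of `Δ°` along `v₁`, i.e. the
length of the interval `⟨·, v₁⟩(Δ°)`, equals `2`. -/
theorem stmt2 (n : ℕ) (V : Finset (Fin n → ℤ)) (v₁ : Fin n → ℤ)
    (Δ : Set (Fin n → ℝ)) (hΔ : Δ = convexHull ℝ (intVec '' (V : Set (Fin n → ℤ))))
    (P : Set (Fin n → ℝ))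
    (hP : P = {u | ∀ x ∈ Δ, -1 ≤ ∑ i, x i * u i})
    -- `0` is an interior point of `Δ`
    (h0 : (0 : Fin n → ℝ) ∈ interior Δ)
    -- reflexivity: the polar `Δ° = P` is a lattice polytope
    (hrefl : P = convexHull ℝ (intVec '' {p : Fin n → ℤ | intVec p ∈ P}))
    -- terminality: the only lattice points of `Δ` are the origin and its vertices
    (hterm : ∀ p : Fin n → ℤ, intVec p ∈ Δ → p = 0 ∨ p ∈ V)
    -- `v₁` is primitive
    (hprimitive : ∀ d : ℤ, (∀ i, d ∣ v₁ i) → IsUnit d) :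
    (v₁ ∈ V ∧ -v₁ ∈ V) ↔
      sSup ((fun x => ∑ i, x i * (v₁ i : ℝ)) '' P) -
        sInf ((fun x => ∑ i, x i * (v₁ i : ℝ)) '' P) = 2 := by
    classical
  have hΔconv : Convex ℝ Δ := hΔ ▸ convex_convexHull ℝ _
  have hΔcompact : IsCompact Δ := by
    rw [hΔ]
    exact (V.finite_toSet.image intVec).isCompact_convexHull ℝ
  have hΔclosed : IsClosed Δ := hΔcompact.isClosed
  have h0Δ : (0 : Fin n → ℝ) ∈ Δ := interior_subset h0
  have h0P : (0 : Fin n → ℝ) ∈ P := by rw [hP]; intro x hx; simp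
  obtain ⟨ε, hε, hball⟩ : ∃ ε > 0, Metric.ball (0 : Fin n → ℝ) ε ⊆ Δ := by
    obtain ⟨ε, hε, h⟩ := Metric.isOpen_iff.mp isOpen_interior 0 h0
    exact ⟨ε, hε, h.trans interior_subset⟩
  obtain ⟨R, hR0, hRb⟩ : ∃ R : ℝ, 0 < R ∧ ∀ x ∈ Δ, ∀ i, |x i| ≤ R := by
    obtain ⟨C, hC⟩ := (isBounded_iff_forall_norm_le.mp hΔcompact.isBounded)
    refine ⟨max C 1, lt_of_lt_of_le one_pos (le_max_right _ _), fun x hx i => ?_⟩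
    calc |x i| = ‖x i‖ := rfl
      _ ≤ ‖x‖ := norm_le_pi_norm x i
      _ ≤ max C 1 := le_trans (hC x hx) (le_max_left _ _)
  -- scaled lattice vectors in P
  have hscaleMem : ∀ (w : Fin n → ℤ) (c : ℝ),
      |c| * (R * ∑ i, |(w i : ℝ)|) ≤ 1 → (c • intVec w) ∈ P := by
    intro w c hc
    rw [hP]; intro x hx
    have h1 : |∑ i, x i * intVec w i| ≤ R * ∑ i, |(w i : ℝ)| := by
      calc |∑ i, x i * intVec w i| ≤ ∑ i, |x i * intVec w i| := Finset.abs_sum_le_sum_abs _ _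
        _ = ∑ i, |x i| * |(w i:ℝ)| := by simp [abs_mul, intVec]
        _ ≤ ∑ i, R * |(w i:ℝ)| :=
            Finset.sum_le_sum fun i _ => mul_le_mul_of_nonneg_right (hRb x hx i) (abs_nonneg _)
        _ = R * ∑ i, |(w i:ℝ)| := by rw [Finset.mul_sum]
    have h2 : ∑ i, x i * (c • intVec w) i = c * ∑ i, x i * intVec w i := sum_mul_smul' _ _ _
    have h3 : |∑ i, x i * (c • intVec w) i| ≤ 1 := by
      rw [h2, abs_mul]
      calc |c| * |∑ i, x i * intVec w i| ≤ |c| * (R * ∑ i, |(w i:ℝ)|) :=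
            mul_le_mul_of_nonneg_left h1 (abs_nonneg _)
        _ ≤ 1 := hc
    linarith [(abs_le.mp h3).1]
  -- sum of squares positive for nonzero lattice vectors
  have hsq : ∀ w : Fin n → ℤ, w ≠ 0 → 0 < ∑ i, intVec w i * intVec w i := by
    intro w hw
    obtain ⟨j, hj⟩ := Function.ne_iff.mp hw
    refine Finset.sum_pos' (fun i _ => mul_self_nonneg _) ⟨j, Finset.mem_univ j, ?_⟩
    refine mul_self_pos.mpr ?_
    simpa [intVec] using hj
  -- strict inequality at interior points
  have hstrict : ∀ x ∈ interior Δ, ∀ u ∈ P, -1 < ∑ i, x i * u i := by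
    intro x hx u hu
    by_contra hle
    push_neg at hle
    rw [hP] at hu
    have heq : ∑ i, x i * u i = -1 := le_antisymm hle (hu x (interior_subset hx))
    have hune : u ≠ 0 := by
      rintro rfl; simp at heq
    have huu : 0 < ∑ i, u i * u i := by
      obtain ⟨j, hj⟩ := Function.ne_iff.mp hune
      refine Finset.sum_pos' (fun i _ => mul_self_nonneg _)
        ⟨j, Finset.mem_univ j, mul_self_pos.mpr (by simpa using hj)⟩
    obtain ⟨r, hr, hball'⟩ := Metric.isOpen_iff.mp isOpen_interior x hx
    set δ := r / (2 * (‖u‖ + 1)) with hδ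
    have hδpos : 0 < δ := by positivity
    have hmem : x - δ • u ∈ Δ := by
      apply interior_subset; apply hball'
      rw [Metric.mem_ball, dist_eq_norm]
      have h4 : x - δ • u - x = -(δ • u) := by abel
      rw [h4, norm_neg, norm_smul, Real.norm_eq_abs, abs_of_pos hδpos]
      have h5 : δ * (‖u‖ + 1) = r / 2 := by
        rw [hδ]; field_simp
      nlinarith [norm_nonneg u]
    have hval : ∑ i, (x - δ • u) i * u i = -1 - δ * ∑ i, u i * u i := by
      have h6 : ∀ i, (x - δ • u) i * u i = x i * u i - δ * (u i * u i) := by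
        intro i; simp [smul_eq_mul]; ring
      rw [Finset.sum_congr rfl fun i _ => h6 i, Finset.sum_sub_distrib, heq, ← Finset.mul_sum]
    have h7 := hu _ hmem
    rw [hval] at h7
    nlinarith
  -- no nonzero interior lattice points
  have hnoint : ∀ w : Fin n → ℤ, intVec w ∈ interior Δ → w = 0 := by
    intro w hw
    by_contra hw0
    have hgen : ∀ u ∈ P, 0 ≤ ∑ i, intVec w i * u i := by
      intro u hu
      have hconv2 : Convex ℝ {u : Fin n → ℝ | 0 ≤ dotL (intVec w) u} :=
        convex_halfSpace_ge (dotL (intVec w)).isLinear 0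
      have hsub : intVec '' {p : Fin n → ℤ | intVec p ∈ P} ⊆ {u | 0 ≤ dotL (intVec w) u} := by
        rintro _ ⟨p, hp, rfl⟩
        have h1 : -1 < ∑ i, intVec w i * intVec p i := hstrict _ hw _ hp
        rw [intVec_dot_cast] at h1
        have h2 : (0:ℤ) ≤ ∑ i, w i * p i := by
          have : (-1:ℤ) < ∑ i, w i * p i := by exact_mod_cast h1
          omega
        show 0 ≤ dotL (intVec w) (intVec p)
        rw [dotL_apply, dot_comm', intVec_dot_cast]
        exact_mod_cast h2
      rw [hrefl] at hu
      have h3 := convexHull_min hsub hconv2 hu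
      rw [Set.mem_setOf_eq, dotL_apply] at h3
      rw [dot_comm']
      exact h3
    have hSnn : (0:ℝ) ≤ ∑ i, |(w i:ℝ)| := Finset.sum_nonneg fun i _ => abs_nonneg _
    have hden : (0:ℝ) < R * (∑ i, |(w i:ℝ)|) + 1 := by nlinarith
    set t := (R * (∑ i, |(w i:ℝ)|) + 1)⁻¹ with ht
    have htpos : 0 < t := inv_pos.mpr hden
    have htle : t * (R * ∑ i, |(w i:ℝ)|) ≤ 1 := by
      calc t * (R * ∑ i, |(w i:ℝ)|) ≤ t * (R * (∑ i, |(w i:ℝ)|) + 1) := by nlinarith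
        _ = 1 := inv_mul_cancel₀ (ne_of_gt hden)
    have hmem : ((-t) • intVec w) ∈ P := by
      apply hscaleMem
      rw [abs_neg, abs_of_pos htpos]
      exact htle
    have h3 := hgen _ hmem
    rw [sum_mul_smul'] at h3
    have h4 := hsq w hw0
    nlinarith
  -- supporting functionals
  have hsupport : ∀ w : Fin n → ℤ, w ≠ 0 → intVec w ∈ Δ →
      ∃ u ∈ P, ∑ i, intVec w i * u i = -1 := by
    intro w hw0 hwΔ
    have hnotint : intVec w ∉ interior Δ := fun h => hw0 (hnoint w h)
    obtain ⟨f, hf⟩ := geometric_hahn_banach_open_point hΔconv.interior isOpen_interior hnotint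
    have hc : 0 < f (intVec w) := by
      have := hf 0 h0
      simpa using this
    set c := f (intVec w) with hcdef
    have hfle : ∀ a ∈ Δ, f a ≤ c := by
      intro a ha
      by_contra hgt
      push_neg at hgt
      have hfa : 0 < f a := lt_trans hc hgt
      set θ := (f a - c)/(2 * f a) with hθ
      have hθ1 : 0 < θ := div_pos (by linarith) (by linarith)
      have h1θ : 0 ≤ 1 - θ := by
        rw [sub_nonneg, hθ, div_le_one (by linarith)]; linarith
      have hθ2 : θ + (1 - θ) = 1 := by ring
      have hmem := hΔconv.combo_interior_self_mem_interior h0 ha hθ1 h1θ hθ2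
      have h8 := hf _ hmem
      have h9 : f (θ • (0:Fin n → ℝ) + (1-θ) • a) = (1-θ) * f a := by
        simp [map_add, map_smul, smul_eq_mul]
      rw [h9] at h8
      have h10 : (1-θ) * f a = (f a + c)/2 := by
        rw [hθ]; field_simp; ring
      rw [h10] at h8
      linarith
    have hsum : ∀ x : Fin n → ℝ, ∑ i, x i * (-(f (Pi.single i 1))/c) = -f x / c := by
      intro x
      have h11 : ∀ i, x i * (-(f (Pi.single i 1))/c) = -(x i * f (Pi.single i 1))/c := by
        intro i; ring
      rw [Finset.sum_congr rfl fun i _ => h11 i, ← Finset.sum_div, Finset.sum_neg_distrib,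
        ← clm_apply_eq_sum, neg_div]
    refine ⟨fun i => -(f (Pi.single i 1))/c, ?_, ?_⟩
    · rw [hP]; intro x hx
      rw [hsum x, neg_div]
      have h12 : f x / c ≤ 1 := (div_le_one hc).mpr (hfle x hx)
      linarith
    · rw [hsum (intVec w), ← hcdef, neg_div, div_self (ne_of_gt hc)]
  -- compactness of P
  have hPclosed : IsClosed P := by
    rw [hP]
    have h13 : {u : Fin n → ℝ | ∀ x ∈ Δ, -1 ≤ ∑ i, x i * u i}
        = ⋂ x ∈ Δ, {u | -1 ≤ ∑ i, x i * u i} := by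
      ext u; simp
    rw [h13]
    refine isClosed_biInter fun x _ => isClosed_le continuous_const ?_
    exact continuous_finset_sum _ fun i _ => continuous_const.mul (continuous_apply i)
  have hPbdd : ∀ u ∈ P, ∀ j, |u j| ≤ 2/ε := by
    intro u hu j
    rw [hP] at hu
    have hmem : ∀ s : ℝ, |s| ≤ ε/2 → (Pi.single j s : Fin n → ℝ) ∈ Δ := by
      intro s hs
      apply hball
      rw [Metric.mem_ball, dist_zero_right, Pi.norm_single, Real.norm_eq_abs]
      linarith
    have key : ∀ s : ℝ, |s| ≤ ε/2 → -1 ≤ s * u j := by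
      intro s hs
      have h14 := hu _ (hmem s hs)
      calc (-1:ℝ) ≤ ∑ i, (Pi.single j s : Fin n → ℝ) i * u i := h14
        _ = s * u j := by
          rw [Finset.sum_eq_single j]
          · simp
          · intro b _ hb; simp [Pi.single_apply, hb]
          · simp
    have h1 := key (ε/2) (by rw [abs_of_pos (by linarith)])
    have h2 := key (-(ε/2)) (by rw [abs_neg, abs_of_pos (by linarith)])
    rw [abs_le]
    constructor
    · rw [← neg_div, div_le_iff₀ hε]; nlinarith
    · rw [le_div_iff₀ hε]; nlinarith
  have hPcompact : IsCompact P := by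
    rw [Metric.isCompact_iff_isClosed_bounded]
    refine ⟨hPclosed, ?_⟩
    rw [isBounded_iff_forall_norm_le]
    refine ⟨2/ε + 1, fun u hu => ?_⟩
    rw [pi_norm_le_iff_of_nonneg (by positivity)]
    intro i
    calc ‖u i‖ = |u i| := rfl
      _ ≤ 2/ε := hPbdd u hu i
      _ ≤ 2/ε + 1 := by linarith
  -- the width functional
  set g : (Fin n → ℝ) → ℝ := fun x => ∑ i, x i * (v₁ i : ℝ) with hgdef
  have hgcont : Continuous g :=
    continuous_finset_sum _ fun i _ => (continuous_apply i).mul continuous_const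
  have hgP : IsCompact (g '' P) := hPcompact.image hgcont
  have hgPne : (g '' P).Nonempty := ⟨g 0, Set.mem_image_of_mem g h0P⟩
  have hbddA : BddAbove (g '' P) := hgP.bddAbove
  have hbddB : BddBelow (g '' P) := hgP.bddBelow
  have hv₁ne : v₁ ≠ 0 := by
    intro h
    have := hprimitive 0 (fun i => by simp [h])
    simp at this
  have hgu : ∀ u : Fin n → ℝ, g u = ∑ i, intVec v₁ i * u i := fun u => dot_comm' u (intVec v₁)
  have hneg_sum : ∀ u : Fin n → ℝ, ∑ i, (-(intVec v₁)) i * u i = -∑ i, intVec v₁ i * u i := by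
    intro u
    rw [← Finset.sum_neg_distrib]
    exact Finset.sum_congr rfl fun i _ => by simp
  constructor
  · rintro ⟨hv, hnv⟩
    have hvΔ : intVec v₁ ∈ Δ := hΔ ▸ subset_convexHull ℝ _ ⟨v₁, hv, rfl⟩
    have hnvΔ : intVec (-v₁) ∈ Δ := hΔ ▸ subset_convexHull ℝ _ ⟨-v₁, hnv, rfl⟩
    have hub : ∀ y ∈ g '' P, y ≤ 1 := by
      rintro _ ⟨u, hu, rfl⟩
      rw [hP] at hu
      have h15 := hu _ hnvΔ
      rw [intVec_neg, hneg_sum] at h15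
      rw [hgu u]
      linarith
    have hlb : ∀ y ∈ g '' P, -1 ≤ y := by
      rintro _ ⟨u, hu, rfl⟩
      rw [hP] at hu
      have h16 := hu _ hvΔ
      rw [hgu u]
      exact h16
    obtain ⟨u₁, hu₁P, hu₁⟩ := hsupport v₁ hv₁ne hvΔ
    obtain ⟨u₂, hu₂P, hu₂⟩ := hsupport (-v₁) (neg_ne_zero.mpr hv₁ne) hnvΔ
    have hg1 : g u₁ = -1 := by rw [hgu]; exact hu₁
    have hg2 : g u₂ = 1 := by
      rw [intVec_neg, hneg_sum] at hu₂
      rw [hgu]; linarith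
    have hsup : sSup (g '' P) = 1 :=
      le_antisymm (csSup_le hgPne hub) (le_csSup hbddA ⟨u₂, hu₂P, hg2⟩)
    have hinf : sInf (g '' P) = -1 :=
      le_antisymm (csInf_le hbddB ⟨u₁, hu₁P, hg1⟩) (le_csInf hgPne hlb)
    rw [hsup, hinf]; norm_num
  · intro hwidth
    have hLsub : intVec '' {p : Fin n → ℤ | intVec p ∈ P} ⊆ P := by
      rintro _ ⟨p, hp, rfl⟩
      exact hp
    have hgcast : ∀ p : Fin n → ℤ, g (intVec p) = ((∑ i, p i * v₁ i : ℤ) : ℝ) := by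
      intro p
      rw [hgdef]
      push_cast [intVec]
      rfl
    have hgdotL : ∀ x : Fin n → ℝ, dotL (intVec v₁) x = g x := fun x => rfl
    have hSupInt : ∃ k : ℤ, sSup (g '' P) = (k:ℝ) := by
      obtain ⟨u, huP, hgu'⟩ := hgP.sSup_mem hgPne
      have huC : u ∈ convexHull ℝ (intVec '' {p : Fin n → ℤ | intVec p ∈ P}) := by
        rw [← hrefl]; exact huP
      have hcv : ConvexOn ℝ Set.univ (dotL (intVec v₁)) :=
        (dotL (intVec v₁)).convexOn convex_univ
      obtain ⟨y, hy, hle⟩ := hcv.exists_ge_of_mem_convexHull (Set.subset_univ _) huC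
      obtain ⟨p, hp, rfl⟩ := hy
      refine ⟨∑ i, p i * v₁ i, ?_⟩
      rw [hgdotL, hgdotL] at hle
      have h17 : g (intVec p) ≤ sSup (g '' P) :=
        le_csSup hbddA ⟨intVec p, hLsub ⟨p, hp, rfl⟩, rfl⟩
      rw [← hgcast p]
      exact le_antisymm (by rw [← hgu']; exact hle) h17
    have hInfInt : ∃ k : ℤ, sInf (g '' P) = (k:ℝ) := by
      obtain ⟨u, huP, hgu'⟩ := hgP.sInf_mem hgPne
      have huC : u ∈ convexHull ℝ (intVec '' {p : Fin n → ℤ | intVec p ∈ P}) := by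
        rw [← hrefl]; exact huP
      have hcv : ConcaveOn ℝ Set.univ (dotL (intVec v₁)) :=
        (dotL (intVec v₁)).concaveOn convex_univ
      obtain ⟨y, hy, hle⟩ := hcv.exists_le_of_mem_convexHull (Set.subset_univ _) huC
      obtain ⟨p, hp, rfl⟩ := hy
      refine ⟨∑ i, p i * v₁ i, ?_⟩
      rw [hgdotL, hgdotL] at hle
      have h17 : sInf (g '' P) ≤ g (intVec p) :=
        csInf_le hbddB ⟨intVec p, hLsub ⟨p, hp, rfl⟩, rfl⟩
      rw [← hgcast p]
      exact le_antisymm h17 (by rw [← hgu']; exact hle)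
    obtain ⟨kM, hkM⟩ := hSupInt
    obtain ⟨km, hkm⟩ := hInfInt
    have hSnn : (0:ℝ) ≤ ∑ i, |(v₁ i:ℝ)| := Finset.sum_nonneg fun i _ => abs_nonneg _
    have hden : (0:ℝ) < R * (∑ i, |(v₁ i:ℝ)|) + 1 := by nlinarith
    set t := (R * (∑ i, |(v₁ i:ℝ)|) + 1)⁻¹ with ht
    have htpos : 0 < t := inv_pos.mpr hden
    have htle : t * (R * ∑ i, |(v₁ i:ℝ)|) ≤ 1 := by
      calc t * (R * ∑ i, |(v₁ i:ℝ)|) ≤ t * (R * (∑ i, |(v₁ i:ℝ)|) + 1) := by nlinarith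
        _ = 1 := inv_mul_cancel₀ (ne_of_gt hden)
    have hmp : (t • intVec v₁) ∈ P := hscaleMem v₁ t (by rw [abs_of_pos htpos]; exact htle)
    have hmm : ((-t) • intVec v₁) ∈ P :=
      hscaleMem v₁ (-t) (by rw [abs_neg, abs_of_pos htpos]; exact htle)
    have hq := hsq v₁ hv₁ne
    have hgp : g (t • intVec v₁) = t * ∑ i, intVec v₁ i * intVec v₁ i := by
      rw [hgu (t • intVec v₁), dot_comm']
      exact smul_mul_sum' _ _ _
    have hgm : g ((-t) • intVec v₁) = -t * ∑ i, intVec v₁ i * intVec v₁ i := by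
      rw [hgu ((-t) • intVec v₁), dot_comm']
      exact smul_mul_sum' _ _ _
    have hMpos : 0 < sSup (g '' P) := by
      have h18 : g (t • intVec v₁) ≤ sSup (g '' P) := le_csSup hbddA ⟨_, hmp, rfl⟩
      rw [hgp] at h18
      nlinarith
    have hmneg : sInf (g '' P) < 0 := by
      have h19 : sInf (g '' P) ≤ g ((-t) • intVec v₁) := csInf_le hbddB ⟨_, hmm, rfl⟩
      rw [hgm] at h19
      nlinarith
    have hk : kM = 1 ∧ km = -1 := by
      have h1r : (0:ℝ) < (kM:ℝ) := by rw [← hkM]; exact hMpos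
      have h2r : ((km:ℤ):ℝ) < 0 := by rw [← hkm]; exact hmneg
      have h1' : (0:ℤ) < kM := by exact_mod_cast h1r
      have h2' : (km:ℤ) < 0 := by exact_mod_cast h2r
      have h3' : (kM:ℤ) - km = 2 := by
        have : (kM:ℝ) - km = 2 := by rw [← hkM, ← hkm]; exact hwidth
        exact_mod_cast this
      omega
    have hsup1 : sSup (g '' P) = 1 := by rw [hkM, hk.1]; norm_num
    have hinf1 : sInf (g '' P) = -1 := by rw [hkm, hk.2]; push_cast; norm_num
    have hgbounds : ∀ u ∈ P, -1 ≤ g u ∧ g u ≤ 1 := fun u hu =>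
      ⟨hinf1 ▸ csInf_le hbddB ⟨u, hu, rfl⟩, hsup1 ▸ le_csSup hbddA ⟨u, hu, rfl⟩⟩
    have hmemΔ : ∀ w : Fin n → ℤ, (∀ u ∈ P, -1 ≤ ∑ i, intVec w i * u i) → intVec w ∈ Δ := by
      intro w hw
      by_contra hnot
      obtain ⟨f, cc, hfc, hfb⟩ := geometric_hahn_banach_point_closed hΔconv hΔclosed hnot
      have hcc : cc < 0 := by
        have := hfb 0 h0Δ
        simpa using this
      have hccpos : (0:ℝ) < -cc := by linarith
      have hsum : ∀ x : Fin n → ℝ, ∑ i, x i * (f (Pi.single i 1) / (-cc)) = f x / (-cc) := by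
        intro x
        have h20 : ∀ i, x i * (f (Pi.single i 1) / (-cc)) = (x i * f (Pi.single i 1))/(-cc) := by
          intro i; ring
        rw [Finset.sum_congr rfl fun i _ => h20 i, ← Finset.sum_div, ← clm_apply_eq_sum]
      have huP : (fun i => f (Pi.single i 1) / (-cc)) ∈ P := by
        rw [hP]; intro x hx
        rw [hsum x, le_div_iff₀ hccpos]
        have h21 := hfb x hx
        linarith
      have h22 := hw _ huP
      rw [hsum (intVec w), le_div_iff₀ hccpos] at h22
      linarith
    have hvΔ : intVec v₁ ∈ Δ := by
      apply hmemΔ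
      intro u hu
      have := (hgbounds u hu).1
      rw [hgu u] at this
      exact this
    have hnvΔ : intVec (-v₁) ∈ Δ := by
      apply hmemΔ
      intro u hu
      have h23 := (hgbounds u hu).2
      rw [hgu u] at h23
      rw [intVec_neg, hneg_sum]
      linarith
    rcases hterm v₁ hvΔ with h | h
    · exact absurd h hv₁ne
    rcases hterm (-v₁) hnvΔ with h' | h'
    · exact absurd (neg_eq_zero.mp h') hv₁ne
    exact ⟨h, h'⟩
end

section
/- Let Δ be a smooth Fano lattice polytope with vertices v₁, v₂, v₃ satisfying v₁ + v₂ = v₃, and assume v₃ is not contained in any primitive pair. Then for every vertex vᵢ with i ≥ 3, up to swapping v₁ and v₂, there exists m ∈ Δ° ∩ M such that ⟨m, v₁⟩ = 0, ⟨m, v₂⟩ = −1, and ⟨m, vᵢ⟩ = −1. -/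
/-!
A facet functional `m` through `v₃ = v₁ + v₂` satisfies `m v₁ + m v₂ = -1` with both values
`≥ -1`, so one of them is `0` and the other `-1`. Since `v₃` lies in no primitive pair, such an
`m` can be chosen through any given vertex `vᵢ` as well.
-/

theorem map_eq_zero_and_neg_one_of_map_add_eq_neg_one {F M : Type*} [AddZeroClass M]
    [FunLike F M ℤ] [AddMonoidHomClass F M ℤ] (m : F) {x y : M}
    (hx : -1 ≤ m x) (hy : -1 ≤ m y) (hxy : m (x + y) = -1) :
    (m x = 0 ∧ m y = -1) ∨ (m y = 0 ∧ m x = -1) := by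
  rw [map_add] at hxy
  omega

theorem stmt3_general (n : ℕ) (Vert : Finset (Fin n → ℤ)) (v₁ v₂ v₃ : Fin n → ℤ)
    (hv₁ : v₁ ∈ Vert) (hv₂ : v₂ ∈ Vert)
    (hrel : v₁ + v₂ = v₃)
    -- `v₃` lies on some facet of `Δ`
    (hfacet : ∃ m : (Fin n → ℤ) →ₗ[ℤ] ℤ, (∀ w ∈ Vert, -1 ≤ m w) ∧ m v₃ = -1)
    -- `v₃` belongs to no primitive pair: `{v₃, v}` lies on a common facet for any other
    -- vertex `v`
    (hnopair : ∀ v ∈ Vert, v ≠ v₃ →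
      ∃ m : (Fin n → ℤ) →ₗ[ℤ] ℤ, (∀ w ∈ Vert, -1 ≤ m w) ∧ m v₃ = -1 ∧ m v = -1) :
    ∀ vᵢ ∈ Vert, vᵢ ≠ v₁ → vᵢ ≠ v₂ →
      ∃ m : (Fin n → ℤ) →ₗ[ℤ] ℤ, (∀ w ∈ Vert, -1 ≤ m w) ∧
        ((m v₁ = 0 ∧ m v₂ = -1 ∧ m vᵢ = -1) ∨ (m v₂ = 0 ∧ m v₁ = -1 ∧ m vᵢ = -1)) := by
  intro vᵢ hvᵢ _ _
  obtain ⟨m, hm, hm₃, hmᵢ⟩ : ∃ m : (Fin n → ℤ) →ₗ[ℤ] ℤ,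
      (∀ w ∈ Vert, -1 ≤ m w) ∧ m v₃ = -1 ∧ m vᵢ = -1 := by
    by_cases hi : vᵢ = v₃
    · obtain ⟨m, hm, hm₃⟩ := hfacet
      exact ⟨m, hm, hm₃, hi ▸ hm₃⟩
    · exact hnopair vᵢ hvᵢ hi
  refine ⟨m, hm, ?_⟩
  rcases map_eq_zero_and_neg_one_of_map_add_eq_neg_one m (hm v₁ hv₁) (hm v₂ hv₂)
    (hrel ▸ hm₃) with ⟨h₁, h₂⟩ | ⟨h₂, h₁⟩
  · exact .inl ⟨h₁, h₂, hmᵢ⟩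
  · exact .inr ⟨h₂, h₁, hmᵢ⟩

/-- Let `Δ` be a smooth Fano lattice polytope with vertex set `Vert`,
and vertices `v₁, v₂, v₃` with `v₁ + v₂ = v₃`.  Lattice points of the polar `Δ°` are
encoded as integral linear functionals `m` with `⟨m,v⟩ ≥ -1` on all vertices, and a
facet containing given vertices corresponds to such an `m` taking the value `-1` there.
Assume `v₃` is contained in no primitive pair, i.e. `v₃` lies on a common facet with
every other vertex (and lies on some facet).  Then for every vertex `vᵢ ∉ {v₁, v₂}`,
up to swapping `v₁` and `v₂`, there exists `m ∈ Δ° ∩ M` with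
`⟨m,v₁⟩ = 0`, `⟨m,v₂⟩ = -1` and `⟨m,vᵢ⟩ = -1`. -/
theorem stmt3 (n : ℕ) (Vert : Finset (Fin n → ℤ)) (v₁ v₂ v₃ : Fin n → ℤ)
    (hv₁ : v₁ ∈ Vert) (hv₂ : v₂ ∈ Vert) (hv₃ : v₃ ∈ Vert)
    (hrel : v₁ + v₂ = v₃)
    -- `v₃` lies on some facet of `Δ`
    (hfacet : ∃ m : (Fin n → ℤ) →ₗ[ℤ] ℤ, (∀ w ∈ Vert, -1 ≤ m w) ∧ m v₃ = -1)
    -- `v₃` belongs to no primitive pair: `{v₃, v}` lies on a common facet for any other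
    -- vertex `v`
    (hnopair : ∀ v ∈ Vert, v ≠ v₃ →
      ∃ m : (Fin n → ℤ) →ₗ[ℤ] ℤ, (∀ w ∈ Vert, -1 ≤ m w) ∧ m v₃ = -1 ∧ m v = -1) :
    ∀ vᵢ ∈ Vert, vᵢ ≠ v₁ → vᵢ ≠ v₂ →
      ∃ m : (Fin n → ℤ) →ₗ[ℤ] ℤ, (∀ w ∈ Vert, -1 ≤ m w) ∧
        ((m v₁ = 0 ∧ m v₂ = -1 ∧ m vᵢ = -1) ∨ (m v₂ = 0 ∧ m v₁ = -1 ∧ m vᵢ = -1)) :=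
  stmt3_general n Vert v₁ v₂ v₃ hv₁ hv₂ hrel hfacet hnopair
end

section
/- Let R be a normal finitely generated algebra over a field K, let m₁,…,m_k ∈ R be nonzero, and suppose q_j = f_j/m₁^{r_j} ∈ R_{m₁} ∩ ⋯ ∩ R_{m_k} for j = 1,…,t. Let R' ⊆ R_{m₁} ∩ ⋯ ∩ R_{m_k} be the subring generated by R and q₁,…,q_t, and set P = R[s₁,…,s_t] and I = ⟨s₁m₁^{r₁} − f₁, …, s_t m₁^{r_t} − f_t⟩. Then R' ≅ P/(I : ⟨m₁⟩^∞). -/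
open MvPolynomial

/-- The saturation `(I : ⟨a⟩^∞)` of an ideal `I` with respect to an element `a`. -/
def idealSaturation {P : Type*} [CommRing P] (I : Ideal P) (a : P) : Ideal P where
  carrier := {p | ∃ N : ℕ, a ^ N * p ∈ I}
  zero_mem' := ⟨0, by simp⟩
  add_mem' := by
    rintro p q ⟨Np, hp⟩ ⟨Nq, hq⟩
    refine ⟨Np + Nq, ?_⟩
    have h := I.add_mem (I.mul_mem_left (a ^ Nq) hp) (I.mul_mem_left (a ^ Np) hq)
    convert h using 1; ring
  smul_mem' := by
    rintro c p ⟨N, hp⟩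
    refine ⟨N, ?_⟩
    rw [smul_eq_mul]
    have h := I.mul_mem_left c hp
    convert h using 1; ring

/-- The localization `R_m` of a domain `R` at the powers of `m`, viewed as a subset of the
fraction field of `R`. -/
def locSet (R : Type*) [CommRing R] [IsDomain R] (m : R) : Set (FractionRing R) :=
  {x | ∃ (b : R) (N : ℕ), x * (algebraMap R (FractionRing R) m) ^ N =
    algebraMap R (FractionRing R) b}

/-- Let `R` be a normal finitely generated algebra over a field `K`,
`m₀, …, m_k ∈ R` nonzero, and suppose `q_j = f_j / m₀^{r_j}` lies in
`R_{m₀} ∩ ⋯ ∩ R_{m_k}` for `j = 1, …, t`.  Let `R'` be the subring of `Frac R` generated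
by `R` and the `q_j`, let `P = R[s₁,…,s_t]` and
`I = ⟨s₁ m₀^{r₁} - f₁, …, s_t m₀^{r_t} - f_t⟩`.  Then `R' ≅ P / (I : ⟨m₀⟩^∞)`. -/
theorem stmt4 (K R : Type) [Field K] [CommRing R] [IsDomain R] [Algebra K R]
    [Algebra.FiniteType K R] [IsIntegrallyClosed R]
    (k t : ℕ) (m : Fin (k + 1) → R) (hm : ∀ i, m i ≠ 0)
    (f : Fin t → R) (r : Fin t → ℕ)
    (q : Fin t → FractionRing R)
    (hq : ∀ j, q j = algebraMap R (FractionRing R) (f j) /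
      (algebraMap R (FractionRing R) (m 0)) ^ (r j))
    (hqloc : ∀ j, ∀ i, q j ∈ locSet R (m i))
    (R' : Subring (FractionRing R))
    (hR' : R' = Subring.closure
      (Set.range (algebraMap R (FractionRing R)) ∪ Set.range q))
    (I : Ideal (MvPolynomial (Fin t) R))
    (hI : I = Ideal.span (Set.range fun j : Fin t =>
      X j * C ((m 0) ^ (r j)) - C (f j))) :
    Nonempty (R' ≃+* (MvPolynomial (Fin t) R ⧸ idealSaturation I (C (m 0)))) := by
  classical
  let F := FractionRing R
  let φ : MvPolynomial (Fin t) R →+* F := (MvPolynomial.aeval q).toRingHom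
  have hφC : ∀ a : R, φ (C a) = algebraMap R F a := fun a => by
    simp [φ]; rfl
  have hφX : ∀ j, φ (X j) = q j := fun j => by simp [φ]
  have hm0 : algebraMap R F (m 0) ≠ 0 := fun h => hm 0 ((map_eq_zero_iff _
    (IsFractionRing.injective R F)).mp h)
  -- generators of I are in the kernel
  have hIker : I ≤ RingHom.ker φ := by
    rw [hI, Ideal.span_le]
    rintro _ ⟨j, rfl⟩
    simp only [SetLike.mem_coe, RingHom.mem_ker, map_sub, map_mul, hφC, hφX]
    rw [hq j, map_pow, div_mul_cancel₀]
    · exact sub_self _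
    · exact pow_ne_zero _ hm0
  -- key reduction lemma
  have key : ∀ p : MvPolynomial (Fin t) R, ∃ (N : ℕ) (g : R),
      C (m 0) ^ N * p - C g ∈ I := by
    intro p
    induction p using MvPolynomial.induction_on with
    | C a => exact ⟨0, a, by simp⟩
    | add p p' hp hp' =>
        obtain ⟨N, g, h⟩ := hp
        obtain ⟨N', g', h'⟩ := hp'
        refine ⟨N + N', m 0 ^ N' * g + m 0 ^ N * g', ?_⟩
        have := I.add_mem (I.mul_mem_left (C (m 0) ^ N') h) (I.mul_mem_left (C (m 0) ^ N) h')
        convert this using 1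
        simp only [map_add, map_mul, map_pow]
        ring
    | mul_X p j hp =>
        obtain ⟨N, g, h⟩ := hp
        refine ⟨N + r j, g * f j, ?_⟩
        have h2 : X j * C ((m 0) ^ (r j)) - C (f j) ∈ I := by
          rw [hI]; exact Ideal.subset_span ⟨j, rfl⟩
        have := I.add_mem (I.mul_mem_left (C (m 0) ^ (r j) * X j) h)
          (I.mul_mem_left (C g) h2)
        convert this using 1
        simp only [map_mul, map_pow]
        ring
  -- kernel = saturation
  have hker : RingHom.ker φ = idealSaturation I (C (m 0)) := by
    ext p
    constructor
    · intro hp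
      obtain ⟨N, g, h⟩ := key p
      have h0 : φ (C (m 0) ^ N * p - C g) = 0 := hIker h
      rw [map_sub, map_mul, map_pow, hφC, hφC, RingHom.mem_ker.mp hp, mul_zero,
        zero_sub, neg_eq_zero] at h0
      have hg0 : g = 0 := (map_eq_zero_iff _ (IsFractionRing.injective R F)).mp h0
      refine ⟨N, ?_⟩
      simpa [hg0] using h
    · rintro ⟨N, hp⟩
      have := hIker hp
      rw [RingHom.mem_ker, map_mul, map_pow, hφC] at this
      rw [RingHom.mem_ker]
      exact (mul_eq_zero.mp this).resolve_left (pow_ne_zero _ hm0)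
  -- range = R'
  have hrange : φ.range = R' := by
    rw [hR', ← Algebra.adjoin_eq_ring_closure, Algebra.adjoin_range_eq_range_aeval]
    ext x
    simp [φ, RingHom.mem_range, AlgHom.mem_range]
  exact ⟨((RingEquiv.subringCongr hrange).symm.trans
    φ.quotientKerEquivRange.symm).trans (Ideal.quotEquivOfEq hker)⟩
end

section
/- Let h = I + N ∈ GLₙ(ℝ) be unipotent with N nilpotent and ker N = ℝe for a nonzero vector e. Then for any vector v ∈ ℝⁿ not proportional to e, writing k ≥ 0 for the largest integer with N^k v ≠ 0, one has N^k v ∈ ℝe, h^r(v) = Σ_{j=0}^{k} C(r,j) N^j v, and the normalized vectors h^r(v)/‖h^r(v)‖ converge, up to sign, to e/‖e‖ as r → +∞. -/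
open Filter Topology

lemma step_ratio (k : ℕ) :
    Tendsto (fun r : ℕ => (r.choose k : ℝ) / (r.choose (k+1))) atTop (𝓝 0) := by
  have h1 : Tendsto (fun r : ℕ => ((k:ℝ)+1) / ((r:ℝ) - k)) atTop (𝓝 0) := by
    apply Tendsto.div_atTop tendsto_const_nhds
    have h2 : Tendsto (fun r : ℕ => (r:ℝ) + (-(k:ℝ))) atTop atTop :=
      tendsto_atTop_add_const_right _ _ tendsto_natCast_atTop_atTop
    exact h2.congr (fun r => by ring)
  refine (Tendsto.congr' ?_ h1)
  filter_upwards [eventually_ge_atTop (k+1)] with r hr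
  have hkr : k ≤ r := le_of_lt hr
  have hpos : 0 < r.choose (k+1) := Nat.choose_pos hr
  have hid : r.choose (k+1) * (k+1) = r.choose k * (r - k) := Nat.choose_succ_right_eq r k
  have hcast : (r.choose (k+1) : ℝ) * ((k:ℝ)+1) = (r.choose k : ℝ) * ((r:ℝ) - k) := by
    have := congrArg (fun x : ℕ => (x : ℝ)) hid
    push_cast [Nat.cast_sub hkr] at this
    linarith [this]
  have hden : (0:ℝ) < (r:ℝ) - k := by
    have : (k:ℝ) < r := by exact_mod_cast hr
    linarith
  rw [div_eq_div_iff hden.ne' (by exact_mod_cast hpos.ne' : (r.choose (k+1):ℝ) ≠ 0)]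
  linarith [hcast]

lemma ratio_tendsto : ∀ k j : ℕ, j < k →
    Tendsto (fun r : ℕ => (r.choose j : ℝ) / (r.choose k)) atTop (𝓝 0) := by
  intro k
  induction k with
  | zero => intro j hj; omega
  | succ k ih =>
    intro j hj
    rcases Nat.lt_succ_iff_lt_or_eq.mp hj with h | h
    · have := (ih j h).mul (step_ratio k)
      rw [zero_mul] at this
      refine Tendsto.congr' ?_ this
      filter_upwards [eventually_ge_atTop (k+1)] with r hr
      have hb : (r.choose k : ℝ) ≠ 0 := by
        exact_mod_cast (Nat.choose_pos (by omega : k ≤ r)).ne'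
      field_simp
    · subst h; exact step_ratio j

lemma stmt11_aux {E : Type*} [NormedAddCommGroup E] [NormedSpace ℝ E]
    (N : E →ₗ[ℝ] E) (e : E) (hene : e ≠ 0)
    (hker : LinearMap.ker N = Submodule.span ℝ {e})
    (v : E) (k : ℕ) (hk : (N ^ k) v ≠ 0) (hk1 : (N ^ (k + 1)) v = 0) :
    (∃ c : ℝ, (N ^ k) v = c • e) ∧
      (∀ r : ℕ, (((1 + N : Module.End ℝ E) ^ r)) v =
        ∑ j ∈ Finset.range (k + 1), (r.choose j : ℝ) • (N ^ j) v) ∧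
      (∃ s : ℕ → ℝ, (∀ r, s r = 1 ∨ s r = -1) ∧
        Tendsto (fun r : ℕ => s r •
            (‖(((1 + N : Module.End ℝ E) ^ r)) v‖⁻¹ •
              (((1 + N : Module.End ℝ E) ^ r)) v))
          atTop (𝓝 (‖e‖⁻¹ • e))) := by
  -- Part 1
  have hmem : (N ^ k) v ∈ LinearMap.ker N := by
    rw [LinearMap.mem_ker, ← Module.End.mul_apply, ← pow_succ']
    exact hk1
  rw [hker, Submodule.mem_span_singleton] at hmem
  obtain ⟨c, hc⟩ := hmem
  have hc' : (N ^ k) v = c • e := hc.symm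
  have hcne : c ≠ 0 := by
    rintro rfl
    rw [zero_smul] at hc'
    exact hk hc'
  -- Part 2
  have hz : ∀ j, k + 1 ≤ j → (N ^ j) v = 0 := by
    intro j hj
    obtain ⟨i, rfl⟩ := Nat.exists_eq_add_of_le hj
    rw [add_comm, pow_add, Module.End.mul_apply, hk1, map_zero]
  have hbin : ∀ r : ℕ, (((1 + N : Module.End ℝ E) ^ r)) v =
      ∑ j ∈ Finset.range (k + 1), (r.choose j : ℝ) • (N ^ j) v := by
    intro r
    have h1 : ((1 + N : Module.End ℝ E) ^ r) v =
        ∑ m ∈ Finset.range (r+1), (r.choose m : ℝ) • (N ^ m) v := by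
      rw [add_comm, (Commute.one_right (N : Module.End ℝ E)).add_pow]
      simp only [LinearMap.sum_apply, Module.End.mul_apply, Module.End.natCast_apply,
        one_pow, mul_one, Nat.cast_smul_eq_nsmul]
      exact Finset.sum_congr rfl fun x _ => map_nsmul _ _ _
    rw [h1]
    have h2 : (∑ m ∈ Finset.range (r+1), (r.choose m : ℝ) • (N ^ m) v)
        = ∑ m ∈ Finset.range (max r k + 1), (r.choose m : ℝ) • (N ^ m) v := by
      apply Finset.sum_subset
      · exact Finset.range_subset_range.mpr (by omega)
      · intro x _ hx
        simp only [Finset.mem_range, not_lt] at hx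
        rw [Nat.choose_eq_zero_of_lt (by omega), Nat.cast_zero, zero_smul]
    rw [h2]
    symm
    apply Finset.sum_subset
    · exact Finset.range_subset_range.mpr (by omega)
    · intro x _ hx
      simp only [Finset.mem_range, not_lt] at hx
      rw [hz x (by omega), smul_zero]
  refine ⟨⟨c, hc'⟩, hbin, ?_⟩
  -- Part 3
  set s0 : ℝ := if 0 < c then 1 else -1 with hs0
  have hs0c : s0 * c = |c| := by
    rw [hs0]
    rcases lt_trichotomy 0 c with h | h | h
    · rw [if_pos h, abs_of_pos h, one_mul]
    · exact absurd h.symm hcne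
    · rw [if_neg (by linarith), abs_of_neg h]; ring
  have habs : |s0| = 1 := by
    rw [hs0]; split_ifs <;> simp
  have hs0ne : s0 ≠ 0 := by
    intro h; rw [h] at habs; simp at habs
  set w : ℕ → E := fun r => (s0 * ((r.choose k : ℝ))⁻¹) • ((1 + N : Module.End ℝ E) ^ r) v
    with hw
  have hwlim : Tendsto w atTop (𝓝 ((s0 * c) • e)) := by
    have hterm : Tendsto (fun r : ℕ =>
        (∑ j ∈ Finset.range k, ((r.choose j : ℝ) / (r.choose k)) • (N ^ j) v) + (N ^ k) v)
        atTop (𝓝 ((0 : E) + (N ^ k) v)) := by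
      apply Tendsto.add _ tendsto_const_nhds
      have h3 : Tendsto (fun r : ℕ =>
          ∑ j ∈ Finset.range k, ((r.choose j : ℝ) / (r.choose k)) • (N ^ j) v)
          atTop (𝓝 (∑ j ∈ Finset.range k, (0 : E))) := by
        apply tendsto_finset_sum
        intro j hj
        have hjk : j < k := Finset.mem_range.mp hj
        have := (ratio_tendsto k j hjk).smul_const ((N ^ j) v)
        rwa [zero_smul] at this
      simpa using h3
    rw [zero_add] at hterm
    have hterm2 := hterm.const_smul s0
    have hgoal : s0 • (N ^ k) v = (s0 * c) • e := by rw [hc', smul_smul]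
    rw [hgoal] at hterm2
    refine Tendsto.congr' ?_ hterm2
    filter_upwards [eventually_ge_atTop k] with r hr
    have hCpos : 0 < r.choose k := Nat.choose_pos hr
    have hC : (r.choose k : ℝ) ≠ 0 := by exact_mod_cast hCpos.ne'
    rw [hw]
    simp only
    rw [hbin r, Finset.sum_range_succ, smul_add, smul_add, Finset.smul_sum, Finset.smul_sum]
    congr 1
    · apply Finset.sum_congr rfl
      intro j _
      rw [smul_smul, smul_smul]
      congr 1
      field_simp
    · rw [smul_smul]
      congr 1
      field_simp
  have hsc : s0 * c ≠ 0 := mul_ne_zero hs0ne hcne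
  have hlimne : (s0 * c) • e ≠ 0 := smul_ne_zero hsc hene
  have hcont : ContinuousAt (fun x : E => ‖x‖⁻¹ • x) ((s0 * c) • e) :=
    ((continuousAt_id.norm).inv₀ (norm_ne_zero_iff.mpr hlimne)).smul continuousAt_id
  have hnorm : Tendsto (fun r : ℕ => ‖w r‖⁻¹ • w r) atTop
      (𝓝 (‖(s0 * c) • e‖⁻¹ • ((s0 * c) • e))) := hcont.tendsto.comp hwlim
  have hval : ‖(s0 * c) • e‖⁻¹ • ((s0 * c) • e) = ‖e‖⁻¹ • e := by
    rw [smul_smul, norm_smul, Real.norm_eq_abs]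
    congr 1
    have he : ‖e‖ ≠ 0 := norm_ne_zero_iff.mpr hene
    have habsc : |s0 * c| ≠ 0 := abs_ne_zero.mpr hsc
    rw [mul_inv]
    rw [abs_of_pos (by rw [hs0c]; exact abs_pos.mpr hcne : 0 < s0 * c)] at habsc ⊢
    field_simp
  rw [hval] at hnorm
  refine ⟨fun _ => s0, fun r => ?_, ?_⟩
  · rw [hs0]; split_ifs
    · exact Or.inl rfl
    · exact Or.inr rfl
  refine Tendsto.congr' ?_ hnorm
  filter_upwards [eventually_ge_atTop k] with r hr
  have hCpos : 0 < r.choose k := Nat.choose_pos hr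
  have hC : (0:ℝ) < (r.choose k : ℝ) := by exact_mod_cast hCpos
  rw [hw]
  simp only
  set x := ((1 + N : Module.End ℝ E) ^ r) v with hx
  have ht : ‖(s0 * ((r.choose k : ℝ))⁻¹) • x‖ = ((r.choose k : ℝ))⁻¹ * ‖x‖ := by
    rw [norm_smul, Real.norm_eq_abs, abs_mul, habs, one_mul, abs_inv,
      abs_of_pos hC]
  rw [ht, smul_smul, smul_smul]
  congr 1
  rcases eq_or_ne ‖x‖ 0 with h0 | h0
  · rw [h0]; simp
  · field_simp

/-- Let `h = I + N` be unipotent with `N` nilpotent and `ker N = ℝe`,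
`e ≠ 0`.  For any `v` not proportional to `e`, with `k` the largest integer such that
`N^k v ≠ 0`, one has `N^k v ∈ ℝe`, the binomial expansion
`h^r v = Σ_{j=0}^{k} C(r,j) N^j v`, and the normalized vectors `h^r v / ‖h^r v‖` converge
up to sign to `e/‖e‖` as `r → +∞`. -/
theorem stmt11 (n : ℕ)
    (N : EuclideanSpace ℝ (Fin n) →ₗ[ℝ] EuclideanSpace ℝ (Fin n))
    (hnil : IsNilpotent (N : Module.End ℝ (EuclideanSpace ℝ (Fin n))))
    (e : EuclideanSpace ℝ (Fin n)) (hene : e ≠ 0)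
    (hker : LinearMap.ker N = Submodule.span ℝ {e})
    (v : EuclideanSpace ℝ (Fin n)) (hv : ¬∃ c : ℝ, v = c • e)
    (k : ℕ) (hk : (N ^ k) v ≠ 0) (hk1 : (N ^ (k + 1)) v = 0) :
    (∃ c : ℝ, (N ^ k) v = c • e) ∧
      (∀ r : ℕ, (((1 + N : Module.End ℝ (EuclideanSpace ℝ (Fin n))) ^ r)) v =
        ∑ j ∈ Finset.range (k + 1), (r.choose j : ℝ) • (N ^ j) v) ∧
      (∃ s : ℕ → ℝ, (∀ r, s r = 1 ∨ s r = -1) ∧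
        Tendsto (fun r : ℕ => s r •
            (‖(((1 + N : Module.End ℝ (EuclideanSpace ℝ (Fin n))) ^ r)) v‖⁻¹ •
              (((1 + N : Module.End ℝ (EuclideanSpace ℝ (Fin n))) ^ r)) v))
          atTop (𝓝 (‖e‖⁻¹ • e))) :=
  stmt11_aux N e hene hker v k hk hk1
end

section
/- Let G ⊂ GL₃(ℤ) be the group generated by the three matrices σ* = [[−1,0,0],[1,1,0],[1,0,1]], ι₁* = [[1,0,4],[0,1,10],[0,0,−1]], ι₂* = [[1,4,0],[0,−1,0],[0,10,1]] (each of which is an involution). Then G is isomorphic to the free product ℤ/2 * ℤ/2 * ℤ/2. -/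
open Matrix

namespace Stmt12Aux

instance : SMul (Matrix (Fin 3) (Fin 3) ℤ)ˣ (Fin 3 → ℤ) :=
  ⟨fun u v => (u : Matrix (Fin 3) (Fin 3) ℤ).mulVec v⟩

lemma smul_def (u : (Matrix (Fin 3) (Fin 3) ℤ)ˣ) (v : Fin 3 → ℤ) :
    u • v = (u : Matrix (Fin 3) (Fin 3) ℤ).mulVec v := rfl

instance act : MulAction (Matrix (Fin 3) (Fin 3) ℤ)ˣ (Fin 3 → ℤ) where
  one_smul v := by rw [smul_def]; simp
  mul_smul u w v := by
    rw [smul_def, smul_def, smul_def, Units.val_mul, ← Matrix.mulVec_mulVec]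

/-- The quadratic form. -/
def Q (v : Fin 3 → ℤ) : ℤ :=
  -2 * v 0 ^ 2 + 2 * v 0 * v 1 + 2 * v 0 * v 2 + 4 * v 1 * v 2

/-- The ping-pong sets. -/
def X : Fin 3 → Set (Fin 3 → ℤ)
  | 0 => {v | 0 < Q v ∧ 0 < v 1 + v 2 ∧ v 0 < 0}
  | 1 => {v | 0 < Q v ∧ 0 < v 1 + v 2 ∧ v 2 < 0}
  | 2 => {v | 0 < Q v ∧ 0 < v 1 + v 2 ∧ v 1 < 0}

lemma zmod2_cases : ∀ x : ZMod 2, x = 0 ∨ x = 1 := by decide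

/-- hom from `Multiplicative (ZMod 2)` sending the generator to an involution `u`. -/
def homZ2 {G : Type*} [Group G] (u : G) (hu : u ^ 2 = 1) : Multiplicative (ZMod 2) →* G where
  toFun x := u ^ (Multiplicative.toAdd x).val
  map_one' := by simp
  map_mul' a b := by
    show u ^ (Multiplicative.toAdd (a * b)).val
        = u ^ (Multiplicative.toAdd a).val * u ^ (Multiplicative.toAdd b).val
    rcases zmod2_cases (Multiplicative.toAdd a) with ha | ha <;>
      rcases zmod2_cases (Multiplicative.toAdd b) with hb | hb <;>
        rw [toAdd_mul, ha, hb]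
    · simp
    · simp
    · simp
    · rw [show ((1 : ZMod 2) + 1).val = 0 by decide, show ((1 : ZMod 2)).val = 1 by decide]
      rw [pow_zero, pow_one, ← pow_two, hu]

lemma homZ2_apply {G : Type*} [Group G] (u : G) (hu : u ^ 2 = 1)
    (x : Multiplicative (ZMod 2)) : homZ2 u hu x = u ^ (Multiplicative.toAdd x).val := rfl

lemma homZ2_ne_one {G : Type*} [Group G] (u : G) (hu : u ^ 2 = 1)
    (x : Multiplicative (ZMod 2)) (hx : x ≠ 1) : homZ2 u hu x = u := by
  rcases zmod2_cases (Multiplicative.toAdd x) with h | h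
  · exact absurd (by rw [← ofAdd_toAdd x, h]; rfl) hx
  · rw [homZ2_apply, h, show ((1 : ZMod 2)).val = 1 by decide, pow_one]


lemma X_zero : X 0 = {v | 0 < Q v ∧ 0 < v 1 + v 2 ∧ v 0 < 0} := rfl
lemma X_one : X 1 = {v | 0 < Q v ∧ 0 < v 1 + v 2 ∧ v 2 < 0} := rfl
lemma X_two : X 2 = {v | 0 < Q v ∧ 0 < v 1 + v 2 ∧ v 1 < 0} := rfl

lemma Xne : ∀ i, (X i).Nonempty := by
  intro i
  fin_cases i
  · show (X 0).Nonempty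
    exact ⟨![-1, 2, 2], by simp only [X_zero, Set.mem_setOf_eq]; decide⟩
  · show (X 1).Nonempty
    exact ⟨![9, 20, -1], by simp only [X_one, Set.mem_setOf_eq]; decide⟩
  · show (X 2).Nonempty
    exact ⟨![9, -1, 20], by simp only [X_two, Set.mem_setOf_eq]; decide⟩

lemma Xdisj : Pairwise (Function.onFun Disjoint X) := by
  intro i j hij
  have key : ∀ a b : Fin 3, a ≠ b → Disjoint (X a) (X b) → Disjoint (X b) (X a) := by
    intro a b _ h; exact h.symm
  rw [Function.onFun]
  fin_cases i <;> fin_cases j <;> first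
    | exact absurd rfl hij
    | · rw [Set.disjoint_left]
        rintro v ⟨hQ1, hc1, h1⟩ ⟨hQ2, hc2, h2⟩
        rw [Q] at hQ1
        nlinarith [hQ1, hc1, h1, h2]

lemma mapσ (v : Fin 3 → ℤ) (hQ : 0 < Q v) (hc : 0 < v 1 + v 2)
    (h : v 1 < 0 ∨ v 2 < 0) : ![-(v 0), v 0 + v 1, v 0 + v 2] ∈ X 0 := by
  rw [Q] at hQ
  have hx : 0 < v 0 := by
    rcases h with h | h
    · have hz : 0 < v 2 := by linarith
      nlinarith
    · have hy : 0 < v 1 := by linarith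
      nlinarith
  refine ⟨?_, ?_, ?_⟩ <;> simp [Q] <;> nlinarith

lemma mapι₁ (v : Fin 3 → ℤ) (hQ : 0 < Q v) (hc : 0 < v 1 + v 2)
    (h : v 0 < 0 ∨ v 1 < 0) : ![v 0 + 4 * v 2, v 1 + 10 * v 2, -(v 2)] ∈ X 1 := by
  rw [Q] at hQ
  have hz : 0 < v 2 := by
    rcases h with h | h
    · by_contra hz
      push_neg at hz
      have hy : 0 < v 1 := by linarith
      nlinarith
    · linarith
  refine ⟨?_, ?_, ?_⟩ <;> simp [Q] <;> nlinarith

lemma mapι₂ (v : Fin 3 → ℤ) (hQ : 0 < Q v) (hc : 0 < v 1 + v 2)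
    (h : v 0 < 0 ∨ v 2 < 0) : ![v 0 + 4 * v 1, -(v 1), 10 * v 1 + v 2] ∈ X 2 := by
  rw [Q] at hQ
  have hy : 0 < v 1 := by
    rcases h with h | h
    · by_contra hy
      push_neg at hy
      have hz : 0 < v 2 := by linarith
      nlinarith
    · linarith
  refine ⟨?_, ?_, ?_⟩ <;> simp [Q] <;> nlinarith

end Stmt12Aux

open Stmt12Aux Monoid Pointwise

/-- Let `G ⊂ GL₃(ℤ)` be the group generated by the three involutive
matrices `σ* = [[-1,0,0],[1,1,0],[1,0,1]]`, `ι₁* = [[1,0,4],[0,1,10],[0,0,-1]]`,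
`ι₂* = [[1,4,0],[0,-1,0],[0,10,1]]`.  Then `G` is isomorphic to the free product
`ℤ/2 * ℤ/2 * ℤ/2`. -/
theorem stmt12 (uσ uι₁ uι₂ : (Matrix (Fin 3) (Fin 3) ℤ)ˣ)
    (hσ : (uσ : Matrix (Fin 3) (Fin 3) ℤ) = !![-1, 0, 0; 1, 1, 0; 1, 0, 1])
    (hι₁ : (uι₁ : Matrix (Fin 3) (Fin 3) ℤ) = !![1, 0, 4; 0, 1, 10; 0, 0, -1])
    (hι₂ : (uι₂ : Matrix (Fin 3) (Fin 3) ℤ) = !![1, 4, 0; 0, -1, 0; 0, 10, 1]) :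
    (uσ ^ 2 = 1 ∧ uι₁ ^ 2 = 1 ∧ uι₂ ^ 2 = 1) ∧
      Nonempty ((Subgroup.closure {uσ, uι₁, uι₂} : Subgroup (Matrix (Fin 3) (Fin 3) ℤ)ˣ) ≃*
        Monoid.CoprodI (fun _ : Fin 3 => Multiplicative (ZMod 2))) := by
  have sq_eq : ∀ (u : (Matrix (Fin 3) (Fin 3) ℤ)ˣ) (M : Matrix (Fin 3) (Fin 3) ℤ),
      (u : Matrix (Fin 3) (Fin 3) ℤ) = M → M * M = 1 → u ^ 2 = 1 := by
    intro u M hM h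
    apply Units.ext
    rw [Units.val_pow_eq_pow_val, pow_two, hM, h, Units.val_one]
  have hσ2 : uσ ^ 2 = 1 := by
    refine sq_eq _ _ hσ ?_
    ext i j
    fin_cases i <;> fin_cases j <;>
      simp [Matrix.mul_apply, Fin.sum_univ_three, Matrix.one_apply, Matrix.vecHead, Matrix.vecTail]
  have hι₁2 : uι₁ ^ 2 = 1 := by
    refine sq_eq _ _ hι₁ ?_
    ext i j
    fin_cases i <;> fin_cases j <;>
      simp [Matrix.mul_apply, Fin.sum_univ_three, Matrix.one_apply, Matrix.vecHead, Matrix.vecTail]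
  have hι₂2 : uι₂ ^ 2 = 1 := by
    refine sq_eq _ _ hι₂ ?_
    ext i j
    fin_cases i <;> fin_cases j <;>
      simp [Matrix.mul_apply, Fin.sum_univ_three, Matrix.one_apply, Matrix.vecHead, Matrix.vecTail]
  refine ⟨⟨hσ2, hι₁2, hι₂2⟩, ?_⟩
  classical
  let u : Fin 3 → (Matrix (Fin 3) (Fin 3) ℤ)ˣ := ![uσ, uι₁, uι₂]
  have hu2 : ∀ i, u i ^ 2 = 1 := by
    intro i; fin_cases i
    · exact hσ2
    · exact hι₁2
    · exact hι₂2
  let f : ∀ _ : Fin 3, Multiplicative (ZMod 2) →* (Matrix (Fin 3) (Fin 3) ℤ)ˣ :=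
    fun i => homZ2 (u i) (hu2 i)
  -- smul formulas
  have hσv : ∀ v : Fin 3 → ℤ, uσ • v = ![-(v 0), v 0 + v 1, v 0 + v 2] := by
    intro v; funext k; rw [smul_def, hσ]
    fin_cases k <;>
      simp [Matrix.mulVec, dotProduct, Fin.sum_univ_three, Matrix.vecHead, Matrix.vecTail]
  have hι₁v : ∀ v : Fin 3 → ℤ, uι₁ • v = ![v 0 + 4 * v 2, v 1 + 10 * v 2, -(v 2)] := by
    intro v; funext k; rw [smul_def, hι₁]
    fin_cases k <;>
      simp [Matrix.mulVec, dotProduct, Fin.sum_univ_three, Matrix.vecHead, Matrix.vecTail]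
  have hι₂v : ∀ v : Fin 3 → ℤ, uι₂ • v = ![v 0 + 4 * v 1, -(v 1), 10 * v 1 + v 2] := by
    intro v; funext k; rw [smul_def, hι₂]
    fin_cases k <;>
      simp [Matrix.mulVec, dotProduct, Fin.sum_univ_three, Matrix.vecHead, Matrix.vecTail]
  -- the ping-pong hypothesis
  have hpp : Pairwise fun i j => ∀ h : Multiplicative (ZMod 2), h ≠ 1 → f i h • X j ⊆ X i := by
    intro i j hij h hh
    rintro _ ⟨v, hv, rfl⟩
    show f i h • v ∈ X i
    rw [show f i h = u i from homZ2_ne_one (u i) (hu2 i) h hh]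
    fin_cases i <;> fin_cases j <;> first
      | exact absurd rfl hij
      | skip
    · obtain ⟨hQ, hc, h1⟩ := hv
      show uσ • v ∈ X 0
      rw [hσv]
      exact mapσ v hQ hc (Or.inr h1)
    · obtain ⟨hQ, hc, h1⟩ := hv
      show uσ • v ∈ X 0
      rw [hσv]
      exact mapσ v hQ hc (Or.inl h1)
    · obtain ⟨hQ, hc, h1⟩ := hv
      show uι₁ • v ∈ X 1
      rw [hι₁v]
      exact mapι₁ v hQ hc (Or.inl h1)
    · obtain ⟨hQ, hc, h1⟩ := hv
      show uι₁ • v ∈ X 1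
      rw [hι₁v]
      exact mapι₁ v hQ hc (Or.inr h1)
    · obtain ⟨hQ, hc, h1⟩ := hv
      show uι₂ • v ∈ X 2
      rw [hι₂v]
      exact mapι₂ v hQ hc (Or.inl h1)
    · obtain ⟨hQ, hc, h1⟩ := hv
      show uι₂ • v ∈ X 2
      rw [hι₂v]
      exact mapι₂ v hQ hc (Or.inr h1)
  have hcard : 3 ≤ Cardinal.mk (Fin 3) ∨
      ∃ i : Fin 3, 3 ≤ Cardinal.mk (Multiplicative (ZMod 2)) := by
    left; rw [Cardinal.mk_fin]; exact le_refl _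
  have hinj : Function.Injective (Monoid.CoprodI.lift f) :=
    Monoid.CoprodI.lift_injective_of_ping_pong f hcard X Xne Xdisj hpp
  have humem : ∀ i : Fin 3, u i ∈ Subgroup.closure {uσ, uι₁, uι₂} := by
    intro i
    apply Subgroup.subset_closure
    fin_cases i <;> simp [u]
  have hrange : (Monoid.CoprodI.lift f).range = Subgroup.closure {uσ, uι₁, uι₂} := by
    apply le_antisymm
    · rintro _ ⟨w, rfl⟩
      induction w using Monoid.CoprodI.induction_on with
      | one => exact one_mem _
      | of i m =>
        rw [Monoid.CoprodI.lift_of]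
        exact pow_mem (humem i) _
      | mul x y hx hy =>
        rw [MonoidHom.map_mul]
        exact mul_mem hx hy
    · rw [Subgroup.closure_le]
      have key : ∀ i : Fin 3, u i ∈ (Monoid.CoprodI.lift f).range := by
        intro i
        refine ⟨Monoid.CoprodI.of (i := i) (Multiplicative.ofAdd 1), ?_⟩
        rw [Monoid.CoprodI.lift_of]
        exact homZ2_ne_one (u i) (hu2 i) _ (by decide)
      rintro x (rfl | rfl | rfl)
      · exact key 0
      · exact key 1
      · exact key 2
  exact ⟨((MonoidHom.ofInjective hinj).trans (MulEquiv.subgroupCongr hrange)).symm⟩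
end

section
/- Let Q be the quadratic form on ℤ³ with Gram matrix [[−2,1,1],[1,0,2],[1,2,0]] in basis (e₁,e₂,e₃), and let Π = {x e₁ + y e₂ + z e₃ : x,y,z ≥ 0, y+z ≥ 2x}. Then h = e₁+e₂+e₃ is the unique integral class D ∈ Π with Q(D,D) = 6 and divisibility div(D) = 3, where div(D) = gcd{Q(D,L) : L ∈ ℤ³}. (Equivalently: the only nonnegative integer solutions of −x² + x(y+z) + 2yz = 3 with y+z ≥ 2x are (1,4,0), (1,1,1), (1,0,4), and among these only (1,1,1) has divisibility 3.) -/
/-! On `Π` we have `x (y + z) ≥ 2x²`, so `-x² + x(y+z) + 2yz = 3` forces `x² + 2yz ≤ 3`, hence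
`x ≤ 1`. For `x = 0` the equation `2yz = 3` has no solution by parity, and for `x = 1` it reads
`(2y + 1)(2z + 1) = 9`, leaving the three listed solutions. Of these, `(1,4,0)` and `(1,0,4)` have
divisibility `1`, so only `(1,1,1)` has divisibility `3`. -/

theorem eq_of_neg_sq_add_mul_add_two_mul_eq_three {x y z : ℤ} (hx : 0 ≤ x) (hy : 0 ≤ y)
    (hz : 0 ≤ z) (hxyz : 2 * x ≤ y + z) (h : -x ^ 2 + x * (y + z) + 2 * y * z = 3) :
    (x, y, z) = (1, 4, 0) ∨ (x, y, z) = (1, 1, 1) ∨ (x, y, z) = (1, 0, 4) := by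
  have hx_le : x ≤ 1 := by nlinarith
  interval_cases x
  · have h_odd : 2 * (y * z) = 3 := by linarith
    omega
  · have h_factor : (2 * y + 1) * (2 * z + 1) = 9 := by linarith
    have hy_le : y ≤ 4 := by nlinarith
    have hz_le : z ≤ 4 := by nlinarith
    interval_cases y <;> interval_cases z <;> simp_all

/-- For the quadratic form with Gram matrix `[[-2,1,1],[1,0,2],[1,2,0]]`,
`h = e₁+e₂+e₃`, i.e. `(x,y,z) = (1,1,1)`, is the unique integral class in
`Π = {x,y,z ≥ 0, y+z ≥ 2x}` with `Q(D,D) = 6` and divisibility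
`div(D) = gcd(-2x+y+z, x+2z, x+2y) = 3`.  Moreover the only nonnegative integer
solutions of `-x² + x(y+z) + 2yz = 3` with `y+z ≥ 2x` are `(1,4,0)`, `(1,1,1)`,
`(1,0,4)`. -/
theorem stmt15 :
    (∀ x y z : ℤ, 0 ≤ x → 0 ≤ y → 0 ≤ z → 2 * x ≤ y + z →
      -2 * x ^ 2 + 2 * x * y + 2 * x * z + 4 * y * z = 6 →
      Int.gcd (Int.gcd (-2 * x + y + z) (x + 2 * z)) (x + 2 * y) = 3 →
      (x, y, z) = (1, 1, 1)) ∧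
    (∀ x y z : ℤ, 0 ≤ x → 0 ≤ y → 0 ≤ z → 2 * x ≤ y + z →
      -x ^ 2 + x * (y + z) + 2 * y * z = 3 →
      (x, y, z) = (1, 4, 0) ∨ (x, y, z) = (1, 1, 1) ∨ (x, y, z) = (1, 0, 4)) := by
  refine ⟨fun x y z hx hy hz hxyz hQ hdiv => ?_,
    fun _ _ _ hx hy hz hxyz h => eq_of_neg_sq_add_mul_add_two_mul_eq_three hx hy hz hxyz h⟩
  have h : -x ^ 2 + x * (y + z) + 2 * y * z = 3 := by linarith
  rcases eq_of_neg_sq_add_mul_add_two_mul_eq_three hx hy hz hxyz h with h | h | h <;>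
    simp only [Prod.mk.injEq] at h <;> obtain ⟨rfl, rfl, rfl⟩ := h
  · exact absurd hdiv (by decide)
  · rfl
  · exact absurd hdiv (by decide)
end

section
/- Let τ ∈ GL₃(ℤ) be the isometry of the lattice (ℤ³, Q) with Gram matrix [[−2,1,1],[1,0,2],[1,2,0]] that fixes e₁ and swaps e₂ and e₃. Let γ = (2e₁ − e₂ + 5e₃)/12 ∈ L*/L ≅ ℤ/12ℤ be a generator of the discriminant group. Then τ acts on the discriminant group by multiplication by 7; in particular τ does not act as ±identity on L*/L. -/
open Matrix

/-- The Gram matrix `[[-2,1,1],[1,0,2],[1,2,0]]`, over `ℚ`. -/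
def gram17 : Matrix (Fin 3) (Fin 3) ℚ := !![-2, 1, 1; 1, 0, 2; 1, 2, 0]

/-- The isometry `τ` fixing `e₁` and swapping `e₂` and `e₃`, over `ℚ`. -/
def tau17 : Matrix (Fin 3) (Fin 3) ℚ := !![1, 0, 0; 0, 0, 1; 0, 1, 0]

/-- The generator `γ = (2e₁ - e₂ + 5e₃)/12` of the discriminant group. -/
def gamma17 : Fin 3 → ℚ := ![2 / 12, -1 / 12, 5 / 12]

/-- A vector of `ℚ³` is integral if it comes from `ℤ³`. -/
def isIntegral17 (v : Fin 3 → ℚ) : Prop := ∃ w : Fin 3 → ℤ, v = fun i => (w i : ℚ)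

/-- The isometry `τ` of the lattice `(ℤ³, Q)` fixing `e₁` and swapping
`e₂, e₃` acts on the discriminant group `L*/L ≅ ℤ/12` (generated by the class of
`γ = (2e₁ - e₂ + 5e₃)/12`) by multiplication by `7`; in particular `τ` does not act as
`±id` on `L*/L` (and `7 ≢ ±1 (mod 12)`). -/
theorem stmt17 :
    tau17.transpose * gram17 * tau17 = gram17 ∧
      isIntegral17 (tau17.mulVec gamma17 - (7 : ℚ) • gamma17) ∧
      ¬ isIntegral17 (tau17.mulVec gamma17 - gamma17) ∧
      ¬ isIntegral17 (tau17.mulVec gamma17 + gamma17) ∧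
      ¬((7 : ZMod 12) = 1) ∧ ¬((7 : ZMod 12) = -1) := by

  refine ⟨?_, ⟨![(-1 : ℤ), 1, -3], ?_⟩, ?_, ?_, by decide, by decide⟩
  · have ht : tau17.transpose = tau17 := by
      ext i j; fin_cases i <;> fin_cases j <;> rfl
    rw [ht]
    ext i j
    fin_cases i <;> fin_cases j <;>
      norm_num [tau17, gram17, Matrix.mul_apply, Fin.sum_univ_three, Matrix.vecHead, Matrix.vecTail, Matrix.cons_val_two]
  · funext i
    fin_cases i <;>
      norm_num [tau17, gamma17, Matrix.mulVec, dotProduct, Fin.sum_univ_three]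
  · rintro ⟨w, hw⟩
    have h := congrFun hw 1
    norm_num [tau17, gamma17, Matrix.mulVec, dotProduct, Fin.sum_univ_three] at h
    have h2 : ((2 * w 1 : ℤ) : ℚ) = 1 := by push_cast; linarith
    have h3 : (2 * w 1 : ℤ) = 1 := by exact_mod_cast h2
    omega
  · rintro ⟨w, hw⟩
    have h := congrFun hw 1
    norm_num [tau17, gamma17, Matrix.mulVec, dotProduct, Fin.sum_univ_three] at h
    have h2 : ((3 * w 1 : ℤ) : ℚ) = 1 := by push_cast; linarith
    have h3 : (3 * w 1 : ℤ) = 1 := by exact_mod_cast h2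
    omega
end
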